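/- Norm relation for the Klein–Gordon complex velocity: writing φ = exp(R/ℏ + iS/ℏ) with real R, S, and V^μ := (1/m₀)[iℏ∂^μ ln φ + eA^μ], one has V*_μ V^μ = (1/m₀²) Re{φ*(iℏD_μ)(iℏD^μ)φ}/(φ*φ) + (ℏ²/2m₀²) ∂_μ∂^μ(φφ*)/(φ*φ), where iℏD_μ := iℏ∂_μ + eA_μ. -/

import Mathlib

open Complex

/-- Partial derivative `∂_μ f` of a complex-valued function on `ℝ⁴`. -/
noncomputable def pdC (i : Fin 4) (f : (Fin 4 → ℝ) → ℂ) (x : Fin 4 → ℝ) : ℂ :=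
  fderiv ℝ f x (Pi.single i 1)

/-- Partial derivative `∂_μ f` of a real-valued function on `ℝ⁴`. -/
noncomputable def pdR (i : Fin 4) (f : (Fin 4 → ℝ) → ℝ) (x : Fin 4 → ℝ) : ℝ :=
  fderiv ℝ f x (Pi.single i 1)

/-- Metric signs of `g = diag(+1,−1,−1,−1)`. -/
def mink (i : Fin 4) : ℝ := if i = 0 then 1 else -1

/-- The d'Alembertian `∂_μ∂^μ f` of a real-valued function. -/
noncomputable def dAlembert (f : (Fin 4 → ℝ) → ℝ) (x : Fin 4 → ℝ) : ℝ :=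
  ∑ μ : Fin 4, mink μ * pdR μ (pdR μ f) x

/-- `φ = exp(R/ℏ + iS/ℏ)`. -/
noncomputable def phiOf (hbar : ℝ) (R S : (Fin 4 → ℝ) → ℝ) (x : Fin 4 → ℝ) : ℂ :=
  Complex.exp ((R x + Complex.I * S x) / hbar)

/-- Complex velocity `V^μ = (1/m₀)[iℏ ∂^μ ln φ + e A^μ]` for `φ = exp(R/ℏ + iS/ℏ)`. -/
noncomputable def Vel (m0 hbar e : ℝ) (R S : (Fin 4 → ℝ) → ℝ)
    (A : Fin 4 → (Fin 4 → ℝ) → ℝ) (μ : Fin 4) (x : Fin 4 → ℝ) : ℂ :=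
  (1 / m0) * (Complex.I * hbar *
      ((mink μ : ℂ) * pdC μ (fun y => ((R y : ℂ) + Complex.I * S y) / hbar) x)
    + e * A μ x)

/-- `iℏD_ν ψ = (iℏ∂_ν + eA_ν)ψ`, with `A_ν = g_{νρ}A^ρ`. -/
noncomputable def opLow (hbar e : ℝ) (A : Fin 4 → (Fin 4 → ℝ) → ℝ) (ν : Fin 4)
    (ψ : (Fin 4 → ℝ) → ℂ) (x : Fin 4 → ℝ) : ℂ :=
  Complex.I * hbar * pdC ν ψ x + e * ((mink ν * A ν x : ℝ) : ℂ) * ψ x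

/-- `(iℏD_μ)(iℏD^μ)ψ`. -/
noncomputable def KGop (hbar e : ℝ) (A : Fin 4 → (Fin 4 → ℝ) → ℝ)
    (ψ : (Fin 4 → ℝ) → ℂ) (x : Fin 4 → ℝ) : ℂ :=
  ∑ ν : Fin 4, (mink ν : ℂ) * opLow hbar e A ν (fun y => opLow hbar e A ν ψ y) x


/-!
Write `G = ln φ = (R + iS)/ℏ` and `P_ν = iℏ∂_νG + eA_ν = m₀V_ν`. Since `iℏD_ν e^G = e^G P_ν`,
applying the operator twice gives `φ*(iℏD_μ)(iℏD^μ)φ = |φ|² Σ_ν g^{νν}(P_ν² + iℏ∂_νP_ν)`, while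
`|φ|² = exp(2R/ℏ)` has `∂_ν∂^ν|φ|²/|φ|² = Σ_ν g^{νν}((2∂_νR/ℏ)² + 2∂_ν²R/ℏ)`. With
`P_ν = (eA_ν − ∂_νS) + i∂_νR`, the real part `Re P_ν² = (eA_ν − ∂_νS)² − (∂_νR)²` together with
the d'Alembertian term `2(∂_νR)²` is `|P_ν|²`, and the second derivatives `∓ℏ∂_ν²R` cancel.
-/

lemma mink_mul_self (i : Fin 4) : mink i * mink i = 1 := by
  unfold mink; split_ifs <;> norm_num

section PartialDerivatives

variable {f g : (Fin 4 → ℝ) → ℂ} {u v : (Fin 4 → ℝ) → ℝ} {x : Fin 4 → ℝ} (i : Fin 4)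

lemma pdC_add (hf : DifferentiableAt ℝ f x) (hg : DifferentiableAt ℝ g x) :
    pdC i (fun y => f y + g y) x = pdC i f x + pdC i g x := by
  rw [pdC, fderiv_fun_add hf hg]; rfl

lemma pdC_const_mul (c : ℂ) (hf : DifferentiableAt ℝ f x) :
    pdC i (fun y => c * f y) x = c * pdC i f x := by
  rw [pdC, fderiv_const_mul hf c]; rfl

lemma pdC_mul (hf : DifferentiableAt ℝ f x) (hg : DifferentiableAt ℝ g x) :
    pdC i (fun y => f y * g y) x = pdC i f x * g x + f x * pdC i g x := by
  rw [pdC, fderiv_fun_mul hf hg]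
  simp only [add_apply, smul_apply, smul_eq_mul, pdC]
  ring

lemma pdC_cexp (hf : DifferentiableAt ℝ f x) :
    pdC i (fun y => cexp (f y)) x = cexp (f x) * pdC i f x := by
  rw [pdC, hf.hasFDerivAt.cexp.fderiv]; rfl

lemma pdC_ofReal (hu : DifferentiableAt ℝ u x) :
    pdC i (fun y => (u y : ℂ)) x = pdR i u x := by
  have h : HasFDerivAt (fun y => (u y : ℂ)) (ofRealCLM.comp (fderiv ℝ u x)) x :=
    ofRealCLM.hasFDerivAt.comp x hu.hasFDerivAt
  rw [pdC, h.fderiv]; rfl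

lemma pdC_ofReal_add_I_mul (hu : DifferentiableAt ℝ u x) (hv : DifferentiableAt ℝ v x) :
    pdC i (fun y => (u y : ℂ) + I * v y) x = pdR i u x + I * pdR i v x := by
  have hu' : DifferentiableAt ℝ (fun y => (u y : ℂ)) x := by fun_prop
  have hv' : DifferentiableAt ℝ (fun y => (v y : ℂ)) x := by fun_prop
  rw [pdC_add i hu' (hv'.const_mul I), pdC_ofReal i hu, pdC_const_mul i I hv', pdC_ofReal i hv]

lemma pdR_mul (hu : DifferentiableAt ℝ u x) (hv : DifferentiableAt ℝ v x) :
    pdR i (fun y => u y * v y) x = pdR i u x * v x + u x * pdR i v x := by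
  rw [pdR, fderiv_fun_mul hu hv]
  simp only [add_apply, smul_apply, smul_eq_mul, pdR]
  ring

lemma pdR_const_mul (c : ℝ) (hu : DifferentiableAt ℝ u x) :
    pdR i (fun y => c * u y) x = c * pdR i u x := by
  rw [pdR, fderiv_const_mul hu c]; rfl

lemma pdR_exp_const_mul (c : ℝ) (hu : DifferentiableAt ℝ u x) :
    pdR i (fun y => Real.exp (c * u y)) x = Real.exp (c * u x) * (c * pdR i u x) := by
  rw [pdR, (hu.hasFDerivAt.const_mul c).exp.fderiv]; rfl

lemma differentiable_pdR (hu : ContDiff ℝ 2 u) : Differentiable ℝ (pdR i u) :=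
  (ContinuousLinearMap.apply ℝ ℝ (Pi.single i 1 : Fin 4 → ℝ)).differentiable.comp
    ((hu.fderiv_right (by norm_num)).differentiable one_ne_zero)

lemma pdR_pdR_exp_const_mul (c : ℝ) (hu : ContDiff ℝ 2 u) :
    pdR i (pdR i (fun y => Real.exp (c * u y))) x
      = Real.exp (c * u x) * (c ^ 2 * pdR i u x ^ 2 + c * pdR i (pdR i u) x) := by
  have hu₁ : Differentiable ℝ u := hu.differentiable two_ne_zero
  have hexp : pdR i (fun y => Real.exp (c * u y))
      = fun y => Real.exp (c * u y) * (c * pdR i u y) :=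
    funext fun y => pdR_exp_const_mul i c (hu₁ y)
  rw [hexp, pdR_mul i ((hu₁ x).const_mul c).exp ((differentiable_pdR i hu x).const_mul c),
    pdR_exp_const_mul i c (hu₁ x), pdR_const_mul i c (differentiable_pdR i hu x)]
  ring

end PartialDerivatives

section KleinGordon

variable (hbar e : ℝ) (A : Fin 4 → (Fin 4 → ℝ) → ℝ)

/-- The lowered momentum `iℏ∂_ν G + eA_ν`; for `G = ln φ` it is `m₀ V_ν`. -/
noncomputable def momentumLow (ν : Fin 4) (G : (Fin 4 → ℝ) → ℂ) (x : Fin 4 → ℝ) : ℂ :=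
  I * hbar * pdC ν G x + e * ((mink ν * A ν x : ℝ) : ℂ)

variable {hbar e A} {G P : (Fin 4 → ℝ) → ℂ} {x : Fin 4 → ℝ} (ν : Fin 4)

lemma opLow_cexp (hG : DifferentiableAt ℝ G x) :
    opLow hbar e A ν (fun y => cexp (G y)) x = cexp (G x) * momentumLow hbar e A ν G x := by
  rw [opLow, pdC_cexp ν hG, momentumLow]; ring

lemma opLow_cexp_mul (hG : DifferentiableAt ℝ G x) (hP : DifferentiableAt ℝ P x) :
    opLow hbar e A ν (fun y => cexp (G y) * P y) x
      = cexp (G x) * (momentumLow hbar e A ν G x * P x + I * hbar * pdC ν P x) := by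
  rw [opLow, pdC_mul ν hG.cexp hP, pdC_cexp ν hG, momentumLow]; ring

lemma KGop_cexp (hG : Differentiable ℝ G)
    (hP : ∀ ν, DifferentiableAt ℝ (momentumLow hbar e A ν G) x) :
    KGop hbar e A (fun y => cexp (G y)) x = cexp (G x) * ∑ ν : Fin 4, (mink ν : ℂ) *
      (momentumLow hbar e A ν G x ^ 2 + I * hbar * pdC ν (momentumLow hbar e A ν G) x) := by
  rw [KGop, Finset.mul_sum]
  refine Finset.sum_congr rfl fun ν _ => ?_
  have hfirst : (fun y => opLow hbar e A ν (fun y => cexp (G y)) y)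
      = fun y => cexp (G y) * momentumLow hbar e A ν G y :=
    funext fun y => opLow_cexp ν (hG y)
  rw [hfirst, opLow_cexp_mul ν (hG x) (hP ν)]; ring

end KleinGordon

section PolarForm

/-- `ln φ` for `φ = exp(R/ℏ + iS/ℏ)`. -/
noncomputable def logPhi (hbar : ℝ) (R S : (Fin 4 → ℝ) → ℝ) (x : Fin 4 → ℝ) : ℂ :=
  ((R x : ℂ) + I * S x) / hbar

variable {hbar e : ℝ} {A : Fin 4 → (Fin 4 → ℝ) → ℝ} {R S : (Fin 4 → ℝ) → ℝ}

lemma normSq_phiOf (y : Fin 4 → ℝ) :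
    normSq (phiOf hbar R S y) = Real.exp (2 / hbar * R y) := by
  rw [phiOf, normSq_eq_norm_sq, norm_exp, ← Real.exp_nat_mul]
  congr 1
  simp only [div_ofReal_re, add_re, ofReal_re, mul_re, I_re, I_im, ofReal_im]
  push_cast
  ring

lemma momentumLow_logPhi (hbar0 : hbar ≠ 0) (ν : Fin 4) {y : Fin 4 → ℝ}
    (hR : DifferentiableAt ℝ R y) (hS : DifferentiableAt ℝ S y) :
    momentumLow hbar e A ν (logPhi hbar R S) y
      = ((e * (mink ν * A ν y) - pdR ν S y : ℝ) : ℂ) + I * pdR ν R y := by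
  have hG : logPhi hbar R S = fun y => (hbar : ℂ)⁻¹ * ((R y : ℂ) + I * S y) := by
    funext y; rw [logPhi, div_eq_inv_mul]
  have hRS : DifferentiableAt ℝ (fun y => (R y : ℂ) + I * S y) y := by fun_prop
  rw [momentumLow, hG, pdC_const_mul ν _ hRS, pdC_ofReal_add_I_mul ν hR hS]
  have hbarC : (hbar : ℂ) ≠ 0 := by exact_mod_cast hbar0
  push_cast
  field_simp
  linear_combination (pdR ν S y : ℂ) * I_sq

lemma differentiable_logPhi (hR : Differentiable ℝ R) (hS : Differentiable ℝ S) :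
    Differentiable ℝ (logPhi hbar R S) := by
  unfold logPhi
  fun_prop

lemma momentumLow_logPhi_eq (hbar0 : hbar ≠ 0) (ν : Fin 4) (hR : Differentiable ℝ R)
    (hS : Differentiable ℝ S) :
    momentumLow hbar e A ν (logPhi hbar R S)
      = fun y => ((e * (mink ν * A ν y) - pdR ν S y : ℝ) : ℂ) + I * pdR ν R y :=
  funext fun y => momentumLow_logPhi hbar0 ν (hR y) (hS y)

variable {x : Fin 4 → ℝ}

lemma differentiableAt_momentumLow_logPhi (hbar0 : hbar ≠ 0) (ν : Fin 4)
    (hR : ContDiff ℝ 2 R) (hS : ContDiff ℝ 2 S) (hA : DifferentiableAt ℝ (A ν) x) :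
    DifferentiableAt ℝ (momentumLow hbar e A ν (logPhi hbar R S)) x := by
  rw [momentumLow_logPhi_eq hbar0 ν (hR.differentiable two_ne_zero)
    (hS.differentiable two_ne_zero)]
  have hR' := differentiable_pdR ν hR x
  have hS' := differentiable_pdR ν hS x
  fun_prop

lemma pdC_momentumLow_logPhi (hbar0 : hbar ≠ 0) (ν : Fin 4)
    (hR : ContDiff ℝ 2 R) (hS : ContDiff ℝ 2 S) (hA : DifferentiableAt ℝ (A ν) x) :
    pdC ν (momentumLow hbar e A ν (logPhi hbar R S)) x
      = ((e * (mink ν * pdR ν (A ν) x) - pdR ν (pdR ν S) x : ℝ) : ℂ)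
        + I * pdR ν (pdR ν R) x := by
  rw [momentumLow_logPhi_eq hbar0 ν (hR.differentiable two_ne_zero)
    (hS.differentiable two_ne_zero)]
  have hS' := differentiable_pdR ν hS x
  have hmA : DifferentiableAt ℝ (fun y => mink ν * A ν y) x := hA.const_mul _
  have ha : DifferentiableAt ℝ (fun y => e * (mink ν * A ν y) - pdR ν S y) x :=
    (hmA.const_mul e).sub hS'
  rw [pdC_ofReal_add_I_mul ν ha (differentiable_pdR ν hR x), pdR,
    fderiv_fun_sub (hmA.const_mul e) hS', fderiv_const_mul hmA, fderiv_const_mul hA]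
  simp only [sub_apply, smul_apply, smul_eq_mul, pdR]

lemma re_conj_phiOf_mul_KGop (hbar0 : hbar ≠ 0) (hR : ContDiff ℝ 2 R) (hS : ContDiff ℝ 2 S)
    (hA : ∀ ν, DifferentiableAt ℝ (A ν) x) :
    ((starRingEnd ℂ) (phiOf hbar R S x) * KGop hbar e A (phiOf hbar R S) x).re
      = normSq (phiOf hbar R S x) * ∑ ν : Fin 4, mink ν *
          ((e * (mink ν * A ν x) - pdR ν S x) ^ 2 - pdR ν R x ^ 2
            - hbar * pdR ν (pdR ν R) x) := by
  have hKG := KGop_cexp (hbar := hbar) (e := e) (A := A) (x := x)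
    (differentiable_logPhi (hR.differentiable two_ne_zero) (hS.differentiable two_ne_zero))
    fun ν => differentiableAt_momentumLow_logPhi hbar0 ν hR hS (hA ν)
  rw [show phiOf hbar R S = fun y => cexp (logPhi hbar R S y) from rfl, hKG, ← mul_assoc,
    ← normSq_eq_conj_mul_self, re_ofReal_mul, re_sum]
  congr 1
  refine Finset.sum_congr rfl fun ν _ => ?_
  rw [momentumLow_logPhi hbar0 ν (hR.differentiable two_ne_zero x)
      (hS.differentiable two_ne_zero x), pdC_momentumLow_logPhi hbar0 ν hR hS (hA ν)]
  simp only [add_re, mul_re, sq, I_re, I_im, ofReal_re, ofReal_im, add_im, mul_im]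
  ring

lemma dAlembert_normSq_phiOf (hR : ContDiff ℝ 2 R) :
    dAlembert (fun y => normSq (phiOf hbar R S y)) x
      = normSq (phiOf hbar R S x) * ∑ ν : Fin 4, mink ν *
          ((2 / hbar) ^ 2 * pdR ν R x ^ 2 + 2 / hbar * pdR ν (pdR ν R) x) := by
  simp only [dAlembert, normSq_phiOf, Finset.mul_sum, pdR_pdR_exp_const_mul _ _ hR]
  refine Finset.sum_congr rfl fun ν _ => ?_
  ring

lemma Vel_eq_mul_momentumLow (m0 : ℝ) (μ : Fin 4) :
    Vel m0 hbar e R S A μ x = 1 / m0 * mink μ * momentumLow hbar e A μ (logPhi hbar R S) x := by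
  have hmink : (mink μ : ℂ) * mink μ = 1 := by exact_mod_cast mink_mul_self μ
  unfold Vel momentumLow logPhi
  push_cast
  linear_combination (-(1 / m0 * e * A μ x) : ℂ) * hmink

lemma sum_conj_Vel_mul_Vel (hbar0 : hbar ≠ 0) (m0 : ℝ) (hR : DifferentiableAt ℝ R x)
    (hS : DifferentiableAt ℝ S x) :
    ∑ μ : Fin 4, (mink μ : ℂ) * (starRingEnd ℂ) (Vel m0 hbar e R S A μ x) * Vel m0 hbar e R S A μ x
      = ((1 / m0 ^ 2 * ∑ μ : Fin 4, mink μ *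
          ((e * (mink μ * A μ x) - pdR μ S x) ^ 2 + pdR μ R x ^ 2) : ℝ) : ℂ) := by
  rw [Finset.mul_sum]
  push_cast
  refine Finset.sum_congr rfl fun μ _ => ?_
  rw [mul_assoc, ← normSq_eq_conj_mul_self, Vel_eq_mul_momentumLow,
    momentumLow_logPhi hbar0 μ hR hS, mul_comm I, normSq_mul, normSq_mul, normSq_add_mul_I]
  simp only [normSq_ofReal, mink_mul_self, one_div, map_inv₀]
  push_cast
  ring

end PolarForm

theorem stmt_15_general (m0 hbar e : ℝ) (hhbar : 0 < hbar)
    (R S : (Fin 4 → ℝ) → ℝ) (hR : ContDiff ℝ 2 R) (hS : ContDiff ℝ 2 S)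
    (A : Fin 4 → (Fin 4 → ℝ) → ℝ) (hA : ∀ μ, ContDiff ℝ 2 (A μ)) :
    ∀ x : Fin 4 → ℝ,
      (∑ μ : Fin 4, (mink μ : ℂ) *
          (starRingEnd ℂ) (Vel m0 hbar e R S A μ x) * Vel m0 hbar e R S A μ x)
      = (((1 / m0 ^ 2) *
            ((starRingEnd ℂ) (phiOf hbar R S x) * KGop hbar e A (phiOf hbar R S) x).re
            / Complex.normSq (phiOf hbar R S x) : ℝ) : ℂ)
        + (((hbar ^ 2 / (2 * m0 ^ 2)) *
            dAlembert (fun y => Complex.normSq (phiOf hbar R S y)) x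
            / Complex.normSq (phiOf hbar R S x) : ℝ) : ℂ) := by
  intro x
  have hbar0 : hbar ≠ 0 := hhbar.ne'
  have hφ : normSq (phiOf hbar R S x) ≠ 0 := by rw [normSq_phiOf]; exact (Real.exp_pos _).ne'
  have hcancel (c s : ℝ) : c * (normSq (phiOf hbar R S x) * s) / normSq (phiOf hbar R S x)
      = c * s := by field_simp
  rw [sum_conj_Vel_mul_Vel hbar0 m0 (hR.differentiable two_ne_zero x)
      (hS.differentiable two_ne_zero x),
    re_conj_phiOf_mul_KGop hbar0 hR hS fun ν => (hA ν).differentiable two_ne_zero x,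
    dAlembert_normSq_phiOf hR, hcancel, hcancel, ← ofReal_add, ofReal_inj,
    Finset.mul_sum, Finset.mul_sum, Finset.mul_sum, ← Finset.sum_add_distrib]
  refine Finset.sum_congr rfl fun ν _ => ?_
  field_simp
  ring

/-- Norm relation for the Klein–Gordon complex velocity:
`V*_μ V^μ = (1/m₀²) Re{φ*(iℏD_μ)(iℏD^μ)φ}/(φ*φ) + (ℏ²/2m₀²) ∂_μ∂^μ(φφ*)/(φ*φ)`. -/
theorem stmt_15 (m0 hbar e : ℝ) (hm0 : 0 < m0) (hhbar : 0 < hbar) (he : 0 < e)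
    (R S : (Fin 4 → ℝ) → ℝ) (hR : ContDiff ℝ 2 R) (hS : ContDiff ℝ 2 S)
    (A : Fin 4 → (Fin 4 → ℝ) → ℝ) (hA : ∀ μ, ContDiff ℝ 2 (A μ)) :
    ∀ x : Fin 4 → ℝ,
      (∑ μ : Fin 4, (mink μ : ℂ) *
          (starRingEnd ℂ) (Vel m0 hbar e R S A μ x) * Vel m0 hbar e R S A μ x)
      = (((1 / m0 ^ 2) *
            ((starRingEnd ℂ) (phiOf hbar R S x) * KGop hbar e A (phiOf hbar R S) x).re
            / Complex.normSq (phiOf hbar R S x) : ℝ) : ℂ)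
        + (((hbar ^ 2 / (2 * m0 ^ 2)) *
            dAlembert (fun y => Complex.normSq (phiOf hbar R S y)) x
            / Complex.normSq (phiOf hbar R S x) : ℝ) : ℂ) :=
  stmt_15_general m0 hbar e hhbar R S hR hS A hA
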